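/- arXiv:math/0110201 — 3 statements merged into one kernel-verified Lean document; each statement's English description precedes it below -/
import Mathlib

section
/- If s : Y × ℂ^m → Y and σ : Y × ℂ^k → Y are holomorphic sprays on a complex manifold Y defined on trivial bundles (i.e. s(y,0)=y and σ(y,0)=y for all y), then the map s ⊕ σ : Y × ℂ^(m+k) → Y defined by (s ⊕ σ)(y, e₁, e₂) = σ(s(y,e₁), e₂) is again a spray on Y, and the image of its vertical differential at the zero section over y equals the sum of the images of the vertical differentials of s and σ at 0_y. -/
/-- The direct sum of two sprays on trivial bundles is a spray, and the image
of its vertical differential at the zero section over `y` equals the sum of the images of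
the vertical differentials of the two sprays. -/
theorem direct_sum_of_sprays
    {d m k : ℕ} (Y : Set (Fin d → ℂ)) (hY : IsOpen Y)
    (s : (Fin d → ℂ) → (Fin m → ℂ) → (Fin d → ℂ))
    (σ : (Fin d → ℂ) → (Fin k → ℂ) → (Fin d → ℂ))
    (hsY : ∀ y ∈ Y, ∀ e, s y e ∈ Y)
    (hσY : ∀ y ∈ Y, ∀ e, σ y e ∈ Y)
    (hs0 : ∀ y ∈ Y, s y 0 = y)
    (hσ0 : ∀ y ∈ Y, σ y 0 = y)
    (hsd : DifferentiableOn ℂ (fun p : (Fin d → ℂ) × (Fin m → ℂ) => s p.1 p.2)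
      (Y ×ˢ Set.univ))
    (hσd : DifferentiableOn ℂ (fun p : (Fin d → ℂ) × (Fin k → ℂ) => σ p.1 p.2)
      (Y ×ˢ Set.univ)) :
    ∀ y ∈ Y,
      -- s ⊕ σ is again a spray on Y:
      (σ (s y 0) 0 = y) ∧ (∀ e₁ e₂, σ (s y e₁) e₂ ∈ Y) ∧
      -- the image of its vertical differential at the zero section over y equals the sum
      -- of the images of the vertical differentials of s and σ at 0_y:
      LinearMap.range
          (fderiv ℂ (fun e : (Fin m → ℂ) × (Fin k → ℂ) => σ (s y e.1) e.2) 0 :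
            (Fin m → ℂ) × (Fin k → ℂ) →ₗ[ℂ] (Fin d → ℂ)) =
        LinearMap.range (fderiv ℂ (fun e => s y e) 0 : (Fin m → ℂ) →ₗ[ℂ] (Fin d → ℂ)) ⊔
          LinearMap.range (fderiv ℂ (fun e => σ y e) 0 : (Fin k → ℂ) →ₗ[ℂ] (Fin d → ℂ)) := by
  intro y hy
  have hopen₁ : IsOpen (Y ×ˢ (Set.univ : Set (Fin m → ℂ))) := hY.prod isOpen_univ
  have hopen₂ : IsOpen (Y ×ˢ (Set.univ : Set (Fin k → ℂ))) := hY.prod isOpen_univ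
  have hmem₁ : ((y, (0 : Fin m → ℂ))) ∈ Y ×ˢ (Set.univ : Set (Fin m → ℂ)) := ⟨hy, trivial⟩
  have hmem₂ : ((y, (0 : Fin k → ℂ))) ∈ Y ×ˢ (Set.univ : Set (Fin k → ℂ)) := ⟨hy, trivial⟩
  have hFd : DifferentiableAt ℂ (fun p : (Fin d → ℂ) × (Fin m → ℂ) => s p.1 p.2) (y, 0) :=
    hsd.differentiableAt (hopen₁.mem_nhds hmem₁)
  have hGd : DifferentiableAt ℂ (fun p : (Fin d → ℂ) × (Fin k → ℂ) => σ p.1 p.2) (y, 0) :=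
    hσd.differentiableAt (hopen₂.mem_nhds hmem₂)
  set A := fderiv ℂ (fun p : (Fin d → ℂ) × (Fin m → ℂ) => s p.1 p.2) (y, 0) with hA
  set B := fderiv ℂ (fun p : (Fin d → ℂ) × (Fin k → ℂ) => σ p.1 p.2) (y, 0) with hB
  have hFA : HasFDerivAt (fun p : (Fin d → ℂ) × (Fin m → ℂ) => s p.1 p.2) A (y, 0) :=
    hFd.hasFDerivAt
  have hGB : HasFDerivAt (fun p : (Fin d → ℂ) × (Fin k → ℂ) => σ p.1 p.2) B (y, 0) :=
    hGd.hasFDerivAt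
  -- B (u, 0) = u  (partial derivative in first variable is identity)
  have hBid : ∀ u, B (u, 0) = u := by
    have h1 : HasFDerivAt (fun x : Fin d → ℂ => σ x 0)
        (B.comp ((ContinuousLinearMap.id ℂ (Fin d → ℂ)).prod 0)) y := by
      have := hGB.comp y ((HasFDerivAt.prodMk (hasFDerivAt_id y : HasFDerivAt (fun x : Fin d → ℂ => x) (ContinuousLinearMap.id ℂ (Fin d → ℂ)) y) (hasFDerivAt_const (0 : Fin k → ℂ) y)))
      exact this
    have h2 : HasFDerivAt (fun x : Fin d → ℂ => x)
        (ContinuousLinearMap.id ℂ (Fin d → ℂ)) y := hasFDerivAt_id y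
    have heq : (fun x : Fin d → ℂ => σ x 0) =ᶠ[nhds y] (fun x => x) :=
      Filter.eventually_of_mem (hY.mem_nhds hy) (fun x hx => hσ0 x hx)
    have h3 : HasFDerivAt (fun x : Fin d → ℂ => σ x 0)
        (ContinuousLinearMap.id ℂ (Fin d → ℂ)) y := h2.congr_of_eventuallyEq heq
    have := h1.unique h3
    intro u
    have := congrArg (fun (L : ((Fin d → ℂ)) →L[ℂ] (Fin d → ℂ)) => L u) this
    simpa using this
  -- derivative of e ↦ s y e at 0
  have hL₁ : HasFDerivAt (fun e : Fin m → ℂ => s y e)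
      (A.comp ((0 : (Fin m → ℂ) →L[ℂ] (Fin d → ℂ)).prod (ContinuousLinearMap.id ℂ _))) 0 :=
    hFA.comp 0 (HasFDerivAt.prodMk (hasFDerivAt_const y 0) (hasFDerivAt_id 0))
  have hL₂ : HasFDerivAt (fun e : Fin k → ℂ => σ y e)
      (B.comp ((0 : (Fin k → ℂ) →L[ℂ] (Fin d → ℂ)).prod (ContinuousLinearMap.id ℂ _))) 0 :=
    hGB.comp 0 (HasFDerivAt.prodMk (hasFDerivAt_const y 0) (hasFDerivAt_id 0))
  set L₁ := A.comp ((0 : (Fin m → ℂ) →L[ℂ] (Fin d → ℂ)).prod (ContinuousLinearMap.id ℂ _))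
  set L₂ := B.comp ((0 : (Fin k → ℂ) →L[ℂ] (Fin d → ℂ)).prod (ContinuousLinearMap.id ℂ _))
  -- derivative of the composite at 0
  have hφ : HasFDerivAt (fun e : (Fin m → ℂ) × (Fin k → ℂ) => ((s y e.1, e.2) :
      (Fin d → ℂ) × (Fin k → ℂ)))
      ((L₁.comp (ContinuousLinearMap.fst ℂ _ _)).prod (ContinuousLinearMap.snd ℂ _ _)) 0 := by
    exact HasFDerivAt.prodMk (hL₁.comp 0 (hasFDerivAt_fst)) (hasFDerivAt_snd)
  have hGB' : HasFDerivAt (fun p : (Fin d → ℂ) × (Fin k → ℂ) => σ p.1 p.2) B (s y 0, 0) := by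
    rw [hs0 y hy]; exact hGB
  have hT : HasFDerivAt (fun e : (Fin m → ℂ) × (Fin k → ℂ) => σ (s y e.1) e.2)
      (B.comp ((L₁.comp (ContinuousLinearMap.fst ℂ _ _)).prod (ContinuousLinearMap.snd ℂ _ _)))
      0 := by
    have := hGB'.comp (0 : (Fin m → ℂ) × (Fin k → ℂ)) hφ
    simpa using this
  refine ⟨by rw [hs0 y hy]; exact hσ0 y hy, fun e₁ e₂ => hσY _ (hsY y hy e₁) e₂, ?_⟩
  rw [hT.fderiv, hL₁.fderiv, hL₂.fderiv]
  have hcop : (B.comp ((L₁.comp (ContinuousLinearMap.fst ℂ _ _)).prod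
      (ContinuousLinearMap.snd ℂ _ _))) = L₁.coprod L₂ := by
    apply ContinuousLinearMap.ext
    intro v
    have h0 : ((L₁ v.1, v.2) : (Fin d → ℂ) × (Fin k → ℂ)) = (L₁ v.1, 0) + (0, v.2) := by
      simp
    have : B (L₁ v.1, v.2) = L₁ v.1 + L₂ v.2 := by
      rw [show (B.comp ((0 : (Fin k → ℂ) →L[ℂ] (Fin d → ℂ)).prod
        (ContinuousLinearMap.id ℂ _))) v.2 = B (0, v.2) from by simp] at *
      rw [h0, map_add, hBid]
    simpa using this
  rw [hcop]
  ext x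
  simp only [LinearMap.mem_range, Submodule.mem_sup, ContinuousLinearMap.coe_coe,
    ContinuousLinearMap.coprod_apply]
  constructor
  · rintro ⟨v, rfl⟩
    exact ⟨L₁ v.1, ⟨v.1, rfl⟩, L₂ v.2, ⟨v.2, rfl⟩, rfl⟩
  · rintro ⟨a, ⟨u, rfl⟩, b, ⟨w, rfl⟩, rfl⟩
    exact ⟨(u, w), rfl⟩
end

section
/- Let s₁, …, s_k be sprays on a complex manifold Y defined on trivial bundles Y × ℂ^{m_j}. The iterated composition s^{(k)} defined inductively by s^{(1)} = s₁ and s^{(j)}(y, e₁, …, e_j) = s_j(s^{(j-1)}(y, e₁, …, e_{j-1}), e_j) is a spray on Y × ℂ^{m₁+⋯+m_k}, and the image of its differential at the zero section over y in the fiber directions equals (ds₁)_{0_y}(ℂ^{m₁}) + ⋯ + (ds_k)_{0_y}(ℂ^{m_k}) ⊆ T_y Y. In particular, the collection (s₁, …, s_k) is dominating at y (the sum of these images is all of T_y Y) if and only if s^{(k)} is dominating at y. -/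
open ContinuousLinearMap in
theorem sprayAux {d : ℕ} {Y : Set (Fin d → ℂ)} (hY : IsOpen Y) :
    ∀ (k : ℕ) (m : Fin k → ℕ)
      (s : (j : Fin k) → (Fin d → ℂ) → (Fin (m j) → ℂ) → (Fin d → ℂ)),
      (∀ j, ∀ y ∈ Y, ∀ e, s j y e ∈ Y) →
      (∀ j, ∀ y ∈ Y, s j y 0 = y) →
      (∀ j, DifferentiableOn ℂ
        (fun p : (Fin d → ℂ) × (Fin (m j) → ℂ) => s j p.1 p.2) (Y ×ˢ Set.univ)) →
      ∀ y ∈ Y,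
        (Fin.foldl k (fun z j => s j z ((0 : (j : Fin k) → Fin (m j) → ℂ) j)) y = y) ∧
        (∀ e : (j : Fin k) → Fin (m j) → ℂ, Fin.foldl k (fun z j => s j z (e j)) y ∈ Y) ∧
        HasFDerivAt
          (fun e : (j : Fin k) → Fin (m j) → ℂ => Fin.foldl k (fun z j => s j z (e j)) y)
          (∑ j, (fderiv ℂ (fun t => s j y t) 0).comp (ContinuousLinearMap.proj j)) 0 := by
  intro k
  induction k with
  | zero =>
    intro m s hsY hs0 hsd y hy
    refine ⟨by simp, fun e => by simpa using hy, ?_⟩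
    have h := hasFDerivAt_const (𝕜 := ℂ) y (0 : (j : Fin 0) → Fin (m j) → ℂ)
    simp only [Finset.univ_eq_empty, Finset.sum_empty]
    exact h.congr_of_eventuallyEq (by filter_upwards with e; simp)
  | succ k ih =>
    intro m s hsY hs0 hsd y hy
    set m' : Fin k → ℕ := fun j => m j.castSucc with hm'
    set s' : (j : Fin k) → (Fin d → ℂ) → (Fin (m' j) → ℂ) → (Fin d → ℂ) :=
      fun j => s j.castSucc with hs'
    obtain ⟨hG0, hGY, hGd⟩ := ih m' s' (fun j => hsY j.castSucc) (fun j => hs0 j.castSucc)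
      (fun j => hsd j.castSucc) y hy
    set R : ((j : Fin (k+1)) → Fin (m j) → ℂ) →L[ℂ] ((j : Fin k) → Fin (m' j) → ℂ) :=
      ContinuousLinearMap.pi (fun j => ContinuousLinearMap.proj j.castSucc) with hR
    have hfold : ∀ e : (j : Fin (k+1)) → Fin (m j) → ℂ,
        Fin.foldl (k+1) (fun z j => s j z (e j)) y
          = s (Fin.last k) (Fin.foldl k (fun z j => s' j z (R e j)) y) (e (Fin.last k)) := by
      intro e
      rw [Fin.foldl_succ_last]
      rfl
    have hR0 : R 0 = 0 := map_zero R
    have hG0' : Fin.foldl k (fun z j => s' j z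
        ((R (0 : (j : Fin (k+1)) → Fin (m j) → ℂ)) j)) y = y := by
      rw [hR0]; exact hG0
    have hmem : ((y, (0 : Fin (m (Fin.last k)) → ℂ)) : _ × _)
        ∈ Y ×ˢ (Set.univ : Set (Fin (m (Fin.last k)) → ℂ)) := ⟨hy, trivial⟩
    have hopen : IsOpen (Y ×ˢ (Set.univ : Set (Fin (m (Fin.last k)) → ℂ))) :=
      hY.prod isOpen_univ
    have hDiff : DifferentiableAt ℂ
        (fun p : (Fin d → ℂ) × (Fin (m (Fin.last k)) → ℂ) => s (Fin.last k) p.1 p.2) (y, 0) :=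
      (hsd (Fin.last k)).differentiableAt (hopen.mem_nhds hmem)
    set D : ((Fin d → ℂ) × (Fin (m (Fin.last k)) → ℂ)) →L[ℂ] (Fin d → ℂ) :=
      fderiv ℂ (fun p : (Fin d → ℂ) × (Fin (m (Fin.last k)) → ℂ) => s (Fin.last k) p.1 p.2)
        (y, 0) with hD
    have hDf : HasFDerivAt (fun p : (Fin d → ℂ) × (Fin (m (Fin.last k)) → ℂ) =>
        s (Fin.last k) p.1 p.2) D (y, 0) := hDiff.hasFDerivAt
    -- D ∘ (id, 0) = id
    set J1 : (Fin d → ℂ) →L[ℂ] ((Fin d → ℂ) × (Fin (m (Fin.last k)) → ℂ)) :=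
      (ContinuousLinearMap.id ℂ _).prod 0 with hJ1
    set J2 : (Fin (m (Fin.last k)) → ℂ) →L[ℂ] ((Fin d → ℂ) × (Fin (m (Fin.last k)) → ℂ)) :=
      (0 : (Fin (m (Fin.last k)) → ℂ) →L[ℂ] (Fin d → ℂ)).prod (ContinuousLinearMap.id ℂ _)
      with hJ2
    have hinl : HasFDerivAt (fun z : Fin d → ℂ => s (Fin.last k) z 0) (D.comp J1) y := by
      have h1 : HasFDerivAt (fun z : Fin d → ℂ =>
          ((z, 0) : _ × (Fin (m (Fin.last k)) → ℂ))) J1 y :=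
        HasFDerivAt.prodMk (hasFDerivAt_id y) (hasFDerivAt_const 0 y)
      exact hDf.comp y h1
    have hinl_id : D.comp J1 = ContinuousLinearMap.id ℂ (Fin d → ℂ) := by
      have hid : HasFDerivAt (fun z : Fin d → ℂ => s (Fin.last k) z 0)
          (ContinuousLinearMap.id ℂ _) y := by
        refine (hasFDerivAt_id y).congr_of_eventuallyEq ?_
        filter_upwards [hY.mem_nhds hy] with z hz
        exact hs0 (Fin.last k) z hz
      exact hinl.unique hid
    have hinr : HasFDerivAt (fun t => s (Fin.last k) y t) (D.comp J2) 0 := by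
      have h2 : HasFDerivAt (fun t : Fin (m (Fin.last k)) → ℂ =>
          ((y, t) : (Fin d → ℂ) × _)) J2 0 :=
        HasFDerivAt.prodMk (hasFDerivAt_const y (0 : Fin (m (Fin.last k)) → ℂ)) (hasFDerivAt_id 0)
      exact hDf.comp 0 h2
    have hinr_eq : D.comp J2 = fderiv ℂ (fun t => s (Fin.last k) y t) 0 := hinr.fderiv.symm
    -- inner map derivative
    have hGd' : HasFDerivAt (fun e' : (j : Fin k) → Fin (m' j) → ℂ =>
        Fin.foldl k (fun z j => s' j z (e' j)) y)
        (∑ j, (fderiv ℂ (fun t => s' j y t) 0).comp (ContinuousLinearMap.proj j)) (R 0) := by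
      rw [hR0]; exact hGd
    have hInner : HasFDerivAt (fun e : (j : Fin (k+1)) → Fin (m j) → ℂ =>
        ((Fin.foldl k (fun z j => s' j z (R e j)) y, e (Fin.last k)) : (Fin d → ℂ) × _))
        (((∑ j, (fderiv ℂ (fun t => s' j y t) 0).comp (ContinuousLinearMap.proj j)).comp R).prod
          (ContinuousLinearMap.proj (Fin.last k))) 0 := by
      exact HasFDerivAt.prodMk (hGd'.comp 0 R.hasFDerivAt) (hasFDerivAt_apply (Fin.last k) 0)
    have hpt : ((Fin.foldl k (fun z j => s' j z
          ((R (0 : (j : Fin (k+1)) → Fin (m j) → ℂ)) j)) y,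
        (0 : (j : Fin (k+1)) → Fin (m j) → ℂ) (Fin.last k)) : _ × _)
        = ((y, 0) : (Fin d → ℂ) × (Fin (m (Fin.last k)) → ℂ)) := by
      rw [hG0']; rfl
    have hcomp : HasFDerivAt (fun e : (j : Fin (k+1)) → Fin (m j) → ℂ =>
        Fin.foldl (k+1) (fun z j => s j z (e j)) y)
        (D.comp ((((∑ j, (fderiv ℂ (fun t => s' j y t) 0).comp
            (ContinuousLinearMap.proj j)).comp R).prod
          (ContinuousLinearMap.proj (Fin.last k))))) 0 := by
      have hDf' : HasFDerivAt (fun p : (Fin d → ℂ) × (Fin (m (Fin.last k)) → ℂ) =>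
          s (Fin.last k) p.1 p.2) D
          ((Fin.foldl k (fun z j => s' j z
            ((R (0 : (j : Fin (k+1)) → Fin (m j) → ℂ)) j)) y,
           (0 : (j : Fin (k+1)) → Fin (m j) → ℂ) (Fin.last k))) := by
        rw [hpt]; exact hDf
      have h1 := hDf'.comp (0 : (j : Fin (k+1)) → Fin (m j) → ℂ) hInner
      refine h1.congr_of_eventuallyEq ?_
      filter_upwards with e
      exact hfold e
    have hkey : D.comp ((((∑ j, (fderiv ℂ (fun t => s' j y t) 0).comp
          (ContinuousLinearMap.proj j)).comp R).prod (ContinuousLinearMap.proj (Fin.last k))))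
        = ∑ j, (fderiv ℂ (fun t => s j y t) 0).comp (ContinuousLinearMap.proj j) := by
      ext v
      have hsplit : ∀ (a : Fin d → ℂ) (b : Fin (m (Fin.last k)) → ℂ),
          D (a, b) = a + fderiv ℂ (fun t => s (Fin.last k) y t) 0 b := by
        intro a b
        have hab : ((a, b) : _ × _) = J1 a + J2 b := by simp [hJ1, hJ2]
        rw [hab, map_add]
        have h1 : D (J1 a) = a := by
          have := DFunLike.congr_fun hinl_id a
          simpa using this
        have h2 : D (J2 b) = fderiv ℂ (fun t => s (Fin.last k) y t) 0 b := by
          have := DFunLike.congr_fun hinr_eq b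
          simpa using this
        rw [h1, h2]
      simp only [ContinuousLinearMap.comp_apply, ContinuousLinearMap.prod_apply,
        ContinuousLinearMap.sum_apply, ContinuousLinearMap.proj_apply]
      rw [hsplit, Fin.sum_univ_castSucc]
      congr 1
    refine ⟨?_, ?_, ?_⟩
    · rw [hfold, hG0']
      exact hs0 (Fin.last k) y hy
    · intro e
      rw [hfold]
      exact hsY (Fin.last k) _ (hGY (R e)) _
    · rw [← hkey]
      exact hcomp

lemma rangeSumProj {d k : ℕ} (m : Fin k → ℕ)
    (L : (j : Fin k) → ((Fin (m j) → ℂ) →L[ℂ] (Fin d → ℂ))) :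
    LinearMap.range ((∑ j, (L j).comp (ContinuousLinearMap.proj j) :
        ((j : Fin k) → Fin (m j) → ℂ) →L[ℂ] (Fin d → ℂ)) :
          ((j : Fin k) → Fin (m j) → ℂ) →ₗ[ℂ] (Fin d → ℂ))
      = ⨆ j, LinearMap.range (L j : (Fin (m j) → ℂ) →ₗ[ℂ] (Fin d → ℂ)) := by
  apply le_antisymm
  · rintro x ⟨v, rfl⟩
    simp only [ContinuousLinearMap.coe_coe, ContinuousLinearMap.coe_sum', Finset.sum_apply,
      ContinuousLinearMap.comp_apply, ContinuousLinearMap.proj_apply]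
    exact Submodule.sum_mem _ fun j _ =>
      (le_iSup (fun j => LinearMap.range (L j : (Fin (m j) → ℂ) →ₗ[ℂ] (Fin d → ℂ))) j) ⟨v j, rfl⟩
  · refine iSup_le fun j => ?_
    rintro x ⟨t, rfl⟩
    refine ⟨Pi.single j t, ?_⟩
    simp only [ContinuousLinearMap.coe_coe, ContinuousLinearMap.coe_sum', Finset.sum_apply,
      ContinuousLinearMap.comp_apply, ContinuousLinearMap.proj_apply]
    rw [Finset.sum_eq_single_of_mem j (Finset.mem_univ j)]
    · rw [Pi.single_eq_same]
    · intro i _ hij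
      rw [Pi.single_eq_of_ne hij, map_zero]



/-- The iterated composition of finitely many sprays on trivial bundles is a
spray whose vertical differential at the zero section has image equal to the sum of the
images of the vertical differentials of the individual sprays; in particular the family is
dominating at `y` iff the composed spray is dominating at `y`. -/
theorem iterated_composition_of_sprays
    {d k : ℕ} (Y : Set (Fin d → ℂ)) (hY : IsOpen Y)
    (m : Fin k → ℕ)
    (s : (j : Fin k) → (Fin d → ℂ) → (Fin (m j) → ℂ) → (Fin d → ℂ))
    (hsY : ∀ j, ∀ y ∈ Y, ∀ e, s j y e ∈ Y)
    (hs0 : ∀ j, ∀ y ∈ Y, s j y 0 = y)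
    (hsd : ∀ j, DifferentiableOn ℂ
      (fun p : (Fin d → ℂ) × (Fin (m j) → ℂ) => s j p.1 p.2) (Y ×ˢ Set.univ)) :
    ∀ y ∈ Y,
      -- the iterated composition s^{(k)}(y, e₁, …, e_k) = s_k(s^{(k-1)}(y,e₁,…,e_{k-1}), e_k)
      (Fin.foldl k (fun z j => s j z ((0 : (j : Fin k) → Fin (m j) → ℂ) j)) y = y) ∧
      (∀ e : (j : Fin k) → Fin (m j) → ℂ, Fin.foldl k (fun z j => s j z (e j)) y ∈ Y) ∧
      LinearMap.range
          ((fderiv ℂ (fun e : (j : Fin k) → Fin (m j) → ℂ =>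
            Fin.foldl k (fun z j => s j z (e j)) y) 0 :
              ((j : Fin k) → Fin (m j) → ℂ) →ₗ[ℂ] (Fin d → ℂ))) =
        (⨆ j : Fin k, LinearMap.range (fderiv ℂ (fun t => s j y t) 0 :
          (Fin (m j) → ℂ) →ₗ[ℂ] (Fin d → ℂ))) ∧
      -- domination of the family at y iff domination of the composed spray at y
      ((⨆ j : Fin k, LinearMap.range (fderiv ℂ (fun t => s j y t) 0 :
          (Fin (m j) → ℂ) →ₗ[ℂ] (Fin d → ℂ)) = ⊤) ↔
        LinearMap.range
          ((fderiv ℂ (fun e : (j : Fin k) → Fin (m j) → ℂ =>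
            Fin.foldl k (fun z j => s j z (e j)) y) 0 :
              ((j : Fin k) → Fin (m j) → ℂ) →ₗ[ℂ] (Fin d → ℂ))) = ⊤) := by
  intro y hy
  obtain ⟨h0, hmem, hF⟩ := sprayAux hY k m s hsY hs0 hsd y hy
  have hrange : LinearMap.range
      ((fderiv ℂ (fun e : (j : Fin k) → Fin (m j) → ℂ =>
        Fin.foldl k (fun z j => s j z (e j)) y) 0 :
          ((j : Fin k) → Fin (m j) → ℂ) →ₗ[ℂ] (Fin d → ℂ)))
      = ⨆ j : Fin k, LinearMap.range (fderiv ℂ (fun t => s j y t) 0 :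
          (Fin (m j) → ℂ) →ₗ[ℂ] (Fin d → ℂ)) := by
    rw [hF.fderiv]
    exact rangeSumProj m _
  exact ⟨h0, hmem, hrange, by rw [hrange]⟩
end

section
/- Let X be a complex manifold, Z₀ a closed subset of a complex manifold Z cut out locally by holomorphic functions g₁,…,g_k, and f : U → Z a holomorphic map on an open U ⊆ X with X₀ = {x ∈ U : f(x) ∈ Z₀}. Let 𝒮 be the ideal sheaf on U generated by the functions g_j ∘ f (in local charts) times the r-th power of the ideal sheaf of X₀. If g : U → Z is another holomorphic map that is 𝒮-tangent to f along X₀ (i.e., in local charts all components of g − f have germs in 𝒮), then there is an open set V ⊇ X₀ such that {x ∈ V : g(x) ∈ Z₀} = X₀. -/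
open Metric Set Filter Topology

/-- Local Lipschitz bound for a complex-differentiable map on an open set,
via the Schwarz lemma along complex lines. -/
lemma locLip {M k : ℕ} {Z : Set (Fin M → ℂ)} (hZ : IsOpen Z)
    (𝔾 : (Fin M → ℂ) → (Fin k → ℂ)) (h𝔾 : DifferentiableOn ℂ 𝔾 Z)
    {w₀ : Fin M → ℂ} (hw₀ : w₀ ∈ Z) :
    ∃ K ≥ (0:ℝ), ∃ r > (0:ℝ), ball w₀ r ⊆ Z ∧
      ∀ u ∈ ball w₀ r, ∀ v ∈ ball w₀ r, ‖𝔾 u - 𝔾 v‖ ≤ K * ‖u - v‖ := by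
  obtain ⟨ε, hε, hball⟩ := Metric.isOpen_iff.1 hZ w₀ hw₀
  set r : ℝ := ε / 4 with hr
  have hrpos : 0 < r := by positivity
  have hcb : closedBall w₀ (3 * r) ⊆ Z := by
    refine Subset.trans (Metric.closedBall_subset_ball ?_) hball
    rw [hr]; linarith
  have h3r : ball w₀ (3 * r) ⊆ Z := Subset.trans Metric.ball_subset_closedBall hcb
  obtain ⟨C, hC⟩ := (isCompact_closedBall w₀ (3 * r)).exists_bound_of_continuousOn
    ((h𝔾.continuousOn).mono hcb)
  set C' : ℝ := max C 0 with hC'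
  have hC'0 : 0 ≤ C' := le_max_right _ _
  have hCb : ∀ w ∈ closedBall w₀ (3 * r), ‖𝔾 w‖ ≤ C' :=
    fun w hw => (hC w hw).trans (le_max_left _ _)
  set K : ℝ := (2 * C' + 1) / (2 * r) with hK
  have hK0 : 0 ≤ K := by positivity
  refine ⟨K, hK0, r, hrpos, fun w hw => hball (Metric.ball_subset_ball (by linarith) hw), ?_⟩
  intro u hu v hv
  rcases eq_or_ne u v with rfl | huv
  · simp [hK0]
  have hd : 0 < ‖u - v‖ := by
    simpa [sub_eq_zero] using huv
  set d : ℝ := ‖u - v‖ with hdd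
  have hd2r : d < 2 * r := by
    have h1 := mem_ball.1 hu
    have h2 := mem_ball.1 hv
    calc d = dist u v := (dist_eq_norm u v).symm
    _ ≤ dist u w₀ + dist w₀ v := dist_triangle _ _ _
    _ < r + r := by rw [dist_comm w₀ v]; linarith
    _ = 2 * r := by ring
  set R₁ : ℝ := (2 * r) / d with hR₁
  have hR₁1 : 1 < R₁ := (one_lt_div hd).2 hd2r
  set φ : ℂ → (Fin k → ℂ) := fun t => 𝔾 (u + t • (v - u)) with hφ
  have hline : ∀ t : ℂ, t ∈ ball (0:ℂ) R₁ → (u + t • (v - u)) ∈ ball w₀ (3 * r) := by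
    intro t ht
    rw [mem_ball, dist_eq_norm]
    have htn : ‖t‖ < R₁ := by simpa [mem_ball, dist_eq_norm] using ht
    have : ‖u + t • (v - u) - w₀‖ ≤ ‖u - w₀‖ + ‖t‖ * ‖v - u‖ := by
      calc ‖u + t • (v - u) - w₀‖ = ‖(u - w₀) + t • (v - u)‖ := by ring_nf
      _ ≤ ‖u - w₀‖ + ‖t • (v - u)‖ := norm_add_le _ _
      _ = ‖u - w₀‖ + ‖t‖ * ‖v - u‖ := by rw [norm_smul]
    have huw : ‖u - w₀‖ < r := by rw [← dist_eq_norm]; exact mem_ball.1 hu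
    have hvu : ‖v - u‖ = d := by rw [hdd, norm_sub_rev]
    have hRd : R₁ * d = 2 * r := by
      rw [hR₁]; field_simp
    have htd : ‖t‖ * ‖v - u‖ < 2 * r := by
      rw [hvu, ← hRd]
      exact mul_lt_mul_of_pos_right htn hd
    linarith
  have hφd : DifferentiableOn ℂ φ (ball (0:ℂ) R₁) := by
    apply DifferentiableOn.comp h𝔾
    · exact (differentiable_const u |>.add ((differentiable_id).smul_const (v - u))).differentiableOn
    · exact fun t ht => h3r (hline t ht)
  have hmaps : MapsTo φ (ball (0:ℂ) R₁) (ball (φ 0) (2 * C' + 1)) := by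
    intro t ht
    rw [mem_ball, dist_eq_norm]
    have h1 : ‖φ t‖ ≤ C' := hCb _ (Metric.ball_subset_closedBall (hline t ht))
    have h0 : ‖φ 0‖ ≤ C' := hCb _ (Metric.ball_subset_closedBall (hline 0 (by
      simpa [mem_ball] using lt_trans one_pos hR₁1)))
    calc ‖φ t - φ 0‖ ≤ ‖φ t‖ + ‖φ 0‖ := norm_sub_le _ _
    _ ≤ C' + C' := add_le_add h1 h0
    _ < 2 * C' + 1 := by linarith
  have h1mem : (1:ℂ) ∈ ball (0:ℂ) R₁ := by
    simpa [mem_ball] using hR₁1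
  have hsch := Complex.dist_le_div_mul_dist_of_mapsTo_ball hφd (hmaps.mono_right ball_subset_closedBall) h1mem
  have hφ1 : φ 1 = 𝔾 v := by simp [hφ]
  have hφ0 : φ 0 = 𝔾 u := by simp [hφ]
  rw [hφ1, hφ0] at hsch
  have hdist1 : dist (1:ℂ) 0 = 1 := by simp
  rw [hdist1, mul_one] at hsch
  have : ‖𝔾 u - 𝔾 v‖ = dist (𝔾 v) (𝔾 u) := by
    rw [dist_eq_norm, norm_sub_rev]
  rw [this]
  calc dist (𝔾 v) (𝔾 u) ≤ (2 * C' + 1) / R₁ := hsch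
  _ = K * d := by rw [hR₁, hK]; field_simp
  _ = K * ‖u - v‖ := rfl


/-- no new intersections for 𝒮-tangent maps: Let `Z₀ ⊆ Z` be cut out by
holomorphic functions `G₁,…,G_k`, `f : U → Z` holomorphic with `X₀ = f⁻¹(Z₀)`, and let `g`
be holomorphic and 𝒮-tangent to `f` along `X₀`, where `𝒮` is generated by the `G_j ∘ f`
times the ideal sheaf of `X₀` (r = 1): near each point of `X₀` each component of `g - f`
is a finite sum `Σ aᵢ·(G_{jᵢ}∘f)·hᵢ` with `aᵢ, hᵢ` holomorphic and `hᵢ` vanishing on `X₀`.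
Then there is an open `V ⊇ X₀` with `{x ∈ V : g(x) ∈ Z₀} = X₀`. -/
theorem tangent_section_has_same_intersection_set
    {Nd M k : ℕ}
    (U : Set (Fin Nd → ℂ)) (hU : IsOpen U)
    (Z : Set (Fin M → ℂ)) (hZ : IsOpen Z)
    (G : Fin k → (Fin M → ℂ) → ℂ)
    (hGd : ∀ j, DifferentiableOn ℂ (G j) Z)
    (Z₀ : Set (Fin M → ℂ)) (hZ₀ : Z₀ = {w ∈ Z | ∀ j, G j w = 0})
    (f g : (Fin Nd → ℂ) → (Fin M → ℂ))
    (hfd : DifferentiableOn ℂ f U) (hgd : DifferentiableOn ℂ g U)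
    (hfZ : ∀ x ∈ U, f x ∈ Z) (hgZ : ∀ x ∈ U, g x ∈ Z)
    (X₀ : Set (Fin Nd → ℂ)) (hX₀ : X₀ = {x ∈ U | f x ∈ Z₀})
    -- 𝒮-tangency of g to f along X₀ (with r = 1):
    (htan : ∀ x ∈ X₀, ∃ W : Set (Fin Nd → ℂ), IsOpen W ∧ x ∈ W ∧ W ⊆ U ∧
      ∀ c : Fin M, ∃ (L : ℕ) (a : Fin L → (Fin Nd → ℂ) → ℂ)
        (j : Fin L → Fin k) (hh : Fin L → (Fin Nd → ℂ) → ℂ),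
        (∀ i, DifferentiableOn ℂ (a i) W) ∧
        (∀ i, DifferentiableOn ℂ (hh i) W) ∧
        (∀ i, ∀ y ∈ W ∩ X₀, hh i y = 0) ∧
        (∀ y ∈ W, g y c - f y c = ∑ i, a i y * G (j i) (f y) * hh i y)) :
    ∃ V : Set (Fin Nd → ℂ), IsOpen V ∧ X₀ ⊆ V ∧ V ⊆ U ∧
      {x ∈ V | g x ∈ Z₀} = X₀ := by
  -- g = f on X₀
  have hgf : ∀ x ∈ X₀, g x = f x := by
    intro x hx
    obtain ⟨W, hWo, hxW, hWU, hcomp⟩ := htan x hx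
    funext c
    obtain ⟨L, a, j, hh, _, _, hh0, hsum⟩ := hcomp c
    have h0 : g x c - f x c = 0 := by
      rw [hsum x hxW]
      refine Finset.sum_eq_zero fun i _ => ?_
      rw [hh0 i x ⟨hxW, hx⟩, mul_zero]
    exact sub_eq_zero.1 h0
  -- the vector function
  set 𝔾 : (Fin M → ℂ) → (Fin k → ℂ) := fun w j => G j w with h𝔾def
  have h𝔾d : DifferentiableOn ℂ 𝔾 Z := differentiableOn_pi.2 hGd
  -- local statement
  have hloc : ∀ x ∈ X₀, ∃ t : Set (Fin Nd → ℂ), IsOpen t ∧ x ∈ t ∧ t ⊆ U ∧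
      ∀ y ∈ t, g y ∈ Z₀ → y ∈ X₀ := by
    intro x hx
    obtain ⟨hxU, hfxZ₀⟩ := (hX₀ ▸ hx : x ∈ {x ∈ U | f x ∈ Z₀})
    have hfxZ : f x ∈ Z := (hZ₀ ▸ hfxZ₀).1
    obtain ⟨W, hWo, hxW, hWU, hcomp⟩ := htan x hx
    obtain ⟨K, hK0, r, hr0, hballZ, hlip⟩ := locLip hZ 𝔾 h𝔾d hfxZ
    set δ : ℝ := 1 / (2 * (K + 1)) with hδdef
    have hδ0 : 0 < δ := by positivity
    have hKδ : K * δ ≤ 1 / 2 := by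
      rw [hδdef, mul_one_div, div_le_div_iff₀ (by positivity) (by norm_num)]
      nlinarith
    choose L a jdx hh ha hhd hh0 hsum using hcomp
    have hWx : W ∈ 𝓝 x := hWo.mem_nhds hxW
    -- eventual smallness of the coefficient sums
    have hev1 : ∀ᶠ y in 𝓝 x, ∀ c : Fin M,
        (∑ i : Fin (L c), ‖a c i y‖ * ‖hh c i y‖) < δ := by
      rw [eventually_all]
      intro c
      have htend : Tendsto (fun y => ∑ i : Fin (L c), ‖a c i y‖ * ‖hh c i y‖)
          (𝓝 x) (𝓝 0) := by
        have h := tendsto_finset_sum (Finset.univ : Finset (Fin (L c)))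
          (fun i _ => ((((ha c i).continuousOn.continuousAt hWx).norm.mul
            (((hhd c i).continuousOn.continuousAt hWx).norm)).tendsto :
              Tendsto (fun y => ‖a c i y‖ * ‖hh c i y‖) (𝓝 x)
                (𝓝 (‖a c i x‖ * ‖hh c i x‖))))
        have hz : (∑ i : Fin (L c), ‖a c i x‖ * ‖hh c i x‖) = 0 :=
          Finset.sum_eq_zero fun i _ => by rw [hh0 c i x ⟨hxW, hx⟩]; simp
        rw [← hz]; exact h
      exact htend.eventually_lt_const hδ0
    -- eventual membership of f y and g y in the ball
    have hfc : ContinuousAt f x := hfd.continuousOn.continuousAt (hU.mem_nhds hxU)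
    have hgc : ContinuousAt g x := hgd.continuousOn.continuousAt (hU.mem_nhds hxU)
    have hgx : g x = f x := hgf x hx
    have hev2 : ∀ᶠ y in 𝓝 x, f y ∈ ball (f x) r :=
      hfc (ball_mem_nhds _ hr0)
    have hev3 : ∀ᶠ y in 𝓝 x, g y ∈ ball (f x) r := by
      have : ∀ᶠ y in 𝓝 x, g y ∈ ball (g x) r := hgc (ball_mem_nhds _ hr0)
      rwa [hgx] at this
    have hev : ∀ᶠ y in 𝓝 x, y ∈ W ∧ f y ∈ ball (f x) r ∧ g y ∈ ball (f x) r ∧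
        ∀ c : Fin M, (∑ i : Fin (L c), ‖a c i y‖ * ‖hh c i y‖) < δ := by
      filter_upwards [hWo.mem_nhds hxW, hev2, hev3, hev1] with y h1 h2 h3 h4
      exact ⟨h1, h2, h3, h4⟩
    obtain ⟨t, hts, hto, hxt⟩ := _root_.eventually_nhds_iff.1 hev
    refine ⟨t, hto, hxt, fun y hy => hWU (hts y hy).1, ?_⟩
    intro y hy hgyZ₀
    obtain ⟨hyW, hfyb, hgyb, hsmall⟩ := hts y hy
    have hyU : y ∈ U := hWU hyW
    -- componentwise bound on g y - f y
    have hcomp_bound : ∀ c : Fin M, ‖g y c - f y c‖ ≤ δ * ‖𝔾 (f y)‖ := by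
      intro c
      rw [hsum c y hyW]
      calc ‖∑ i : Fin (L c), a c i y * G (jdx c i) (f y) * hh c i y‖
          ≤ ∑ i : Fin (L c), ‖a c i y * G (jdx c i) (f y) * hh c i y‖ :=
            norm_sum_le _ _
        _ ≤ ∑ i : Fin (L c), ‖a c i y‖ * ‖hh c i y‖ * ‖𝔾 (f y)‖ := by
            refine Finset.sum_le_sum fun i _ => ?_
            rw [norm_mul, norm_mul]
            have hGle : ‖G (jdx c i) (f y)‖ ≤ ‖𝔾 (f y)‖ :=
              norm_le_pi_norm (𝔾 (f y)) (jdx c i)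
            calc ‖a c i y‖ * ‖G (jdx c i) (f y)‖ * ‖hh c i y‖
                ≤ ‖a c i y‖ * ‖𝔾 (f y)‖ * ‖hh c i y‖ := by
                  have := mul_le_mul_of_nonneg_left hGle (norm_nonneg (a c i y))
                  exact mul_le_mul_of_nonneg_right this (norm_nonneg _)
              _ = ‖a c i y‖ * ‖hh c i y‖ * ‖𝔾 (f y)‖ := by ring
        _ = (∑ i : Fin (L c), ‖a c i y‖ * ‖hh c i y‖) * ‖𝔾 (f y)‖ := by
            rw [Finset.sum_mul]
        _ ≤ δ * ‖𝔾 (f y)‖ :=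
            mul_le_mul_of_nonneg_right (hsmall c).le (norm_nonneg _)
    have hgfy : ‖g y - f y‖ ≤ δ * ‖𝔾 (f y)‖ := by
      rw [pi_norm_le_iff_of_nonneg (mul_nonneg hδ0.le (norm_nonneg _))]
      intro c
      simpa using hcomp_bound c
    -- 𝔾 (g y) = 0
    have hGg0 : 𝔾 (g y) = 0 := by
      funext j
      exact (hZ₀ ▸ hgyZ₀ : g y ∈ {w ∈ Z | ∀ j, G j w = 0}).2 j
    -- Lipschitz estimate
    have hlipfg : ‖𝔾 (f y) - 𝔾 (g y)‖ ≤ K * ‖f y - g y‖ := hlip _ hfyb _ hgyb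
    have hkey : ‖𝔾 (f y)‖ ≤ K * δ * ‖𝔾 (f y)‖ := by
      calc ‖𝔾 (f y)‖ = ‖𝔾 (f y) - 𝔾 (g y)‖ := by rw [hGg0, sub_zero]
        _ ≤ K * ‖f y - g y‖ := hlipfg
        _ = K * ‖g y - f y‖ := by rw [norm_sub_rev]
        _ ≤ K * (δ * ‖𝔾 (f y)‖) := mul_le_mul_of_nonneg_left hgfy hK0
        _ = K * δ * ‖𝔾 (f y)‖ := by ring
    have hGf0 : 𝔾 (f y) = 0 := by
      by_contra hne
      have hpos : 0 < ‖𝔾 (f y)‖ := norm_pos_iff.2 hne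
      nlinarith [hkey, hKδ]
    have hfyZ₀ : f y ∈ Z₀ := by
      rw [hZ₀]
      exact ⟨hfZ y hyU, fun j => congrFun hGf0 j⟩
    rw [hX₀]
    exact ⟨hyU, hfyZ₀⟩
  -- assemble V
  choose! t ht1 ht2 ht3 ht4 using hloc
  refine ⟨⋃ x ∈ X₀, t x, isOpen_biUnion ht1, fun x hx => mem_biUnion hx (ht2 x hx),
    iUnion₂_subset ht3, ?_⟩
  ext y
  constructor
  · rintro ⟨hyV, hyZ₀⟩
    obtain ⟨x, hx, hyt⟩ := mem_iUnion₂.1 hyV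
    exact ht4 x hx y hyt hyZ₀
  · intro hy
    refine ⟨mem_biUnion hy (ht2 y hy), ?_⟩
    rw [hgf y hy]
    exact (hX₀ ▸ hy : y ∈ {x ∈ U | f x ∈ Z₀}).2
end
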